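/- arXiv:1901.07736 — 7 statements merged into one kernel-verified Lean document; each statement's English description precedes it below -/
import Mathlib

section
/- Let φ(z) = az + b with 0 < |a| < 1, let p = b/(1-a) be the fixed point of φ, and let ψ be entire with C_{ψ,φ} bounded on F². Then C_{ψ,φ} is unitarily equivalent to C_{q, az}, where q(z) = e^{conj(p)(a-1)z} ψ(z+p); specifically, C_{k_p, z-p}* C_{ψ,φ} C_{k_p, z-p} = C_{q, az}, where k_p = K_p/‖K_p‖ is the normalized reproducing kernel. -/
open MeasureTheory Complex

/-- The Gaussian measure `π⁻¹ e^{-|z|²} dA(z)` on `ℂ`. -/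
noncomputable def gaussMeasure : Measure ℂ :=
  (volume : Measure ℂ).withDensity fun z => ENNReal.ofReal (Real.exp (-(‖z‖ ^ 2)) / Real.pi)

/-- A function is entire if it is differentiable on all of `ℂ`. -/
def Entire (f : ℂ → ℂ) : Prop := Differentiable ℂ f

/-- The squared Fock-space norm `∫ |f|² dμ`. -/
noncomputable def fockNormSq (f : ℂ → ℂ) : ℝ := ∫ z, ‖f z‖ ^ 2 ∂gaussMeasure

/-- Membership in the Fock space `F²`: entire and square integrable w.r.t. the Gaussian. -/
def MemFock (f : ℂ → ℂ) : Prop :=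
  Entire f ∧ Integrable (fun z => ‖f z‖ ^ 2) gaussMeasure

/-- The Fock-space inner product `⟨f, g⟩ = ∫ f ḡ dμ`. -/
noncomputable def fockInner (f g : ℂ → ℂ) : ℂ :=
  ∫ z, f z * (starRingEnd ℂ) (g z) ∂gaussMeasure

/-- The weighted composition operator `C_{ψ,φ} f = ψ · (f ∘ φ)`. -/
def wcomp (ψ φ f : ℂ → ℂ) : ℂ → ℂ := fun z => ψ z * f (φ z)

/-- Boundedness of `C_{ψ,φ}` on `F²`. -/
def BoundedWCO (ψ φ : ℂ → ℂ) : Prop :=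
  ∃ C : ℝ, ∀ f, MemFock f →
    MemFock (wcomp ψ φ f) ∧ fockNormSq (wcomp ψ φ f) ≤ C * fockNormSq f

/-- The numerical range `W(C_{ψ,φ}) = {⟨C_{ψ,φ} f, f⟩ : ‖f‖ = 1}` on `F²`. -/
noncomputable def numRange (ψ φ : ℂ → ℂ) : Set ℂ :=
  {w | ∃ f, MemFock f ∧ fockNormSq f = 1 ∧ w = fockInner (wcomp ψ φ f) f}

/-- The point spectrum of `C_{ψ,φ}` on `F²`. -/
def pointSpectrum (ψ φ : ℂ → ℂ) : Set ℂ :=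
  {lam | ∃ f, MemFock f ∧ f ≠ 0 ∧ wcomp ψ φ f = fun z => lam * f z}

/-- Compactness of `C_{ψ,φ}` on `F²`: it is bounded and the image of every sequence in the
unit ball of `F²` has a subsequence which is Cauchy in the `F²` norm. -/
def CompactWCO (ψ φ : ℂ → ℂ) : Prop :=
  BoundedWCO ψ φ ∧ ∀ f : ℕ → ℂ → ℂ, (∀ k, MemFock (f k) ∧ fockNormSq (f k) ≤ 1) →
    ∃ g : ℕ → ℕ, StrictMono g ∧ ∀ ε : ℝ, 0 < ε → ∃ N : ℕ, ∀ i, N ≤ i → ∀ j, N ≤ j →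
      fockNormSq (fun z => wcomp ψ φ (f (g i)) z - wcomp ψ φ (f (g j)) z) < ε

/-- For `φ(z) = az + b` with `0 < |a| < 1` and fixed point `p = b/(1-a)`,
`C_{ψ,φ}` is unitarily equivalent to `C_{q,az}` where `q(z) = e^{p̄(a-1)z} ψ(z+p)`:
conjugating by the unitary `C_{k_p, z-p}` (whose adjoint is `C_{k_{-p}, z+p}`) gives
`C_{k_{-p},z+p} C_{ψ,φ} C_{k_p,z-p} = C_{q,az}`. -/
theorem unitary_equivalence_to_Cqaz
    (a b : ℂ) (ha0 : 0 < ‖a‖) (ha1 : ‖a‖ < 1)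
    (ψ : ℂ → ℂ) (hψ : Entire ψ)
    (φ : ℂ → ℂ) (hφ : φ = fun z => a * z + b)
    (hbdd : BoundedWCO ψ φ)
    (p : ℂ) (hp : p = b / (1 - a))
    (kp : ℂ → ℂ) (hkp : kp = fun z => Complex.exp ((starRingEnd ℂ) p * z) / (Real.exp (‖p‖ ^ 2 / 2) : ℂ))
    (knp : ℂ → ℂ) (hknp : knp = fun z => Complex.exp ((starRingEnd ℂ) (-p) * z) / (Real.exp (‖p‖ ^ 2 / 2) : ℂ))
    (q : ℂ → ℂ) (hq : q = fun z => Complex.exp ((starRingEnd ℂ) p * (a - 1) * z) * ψ (z + p)) :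
    ∀ h : ℂ → ℂ,
      wcomp knp (fun z => z + p) (wcomp ψ φ (wcomp kp (fun z => z - p) h)) =
        wcomp q (fun z => a * z) h := by
  intro h
  have hane : (1 : ℂ) - a ≠ 0 := by
    intro h1
    have : a = 1 := by linear_combination -h1
    rw [this] at ha1; simp at ha1
  have hfix : a * p + b = p := by
    rw [hp]; field_simp; ring
  funext z
  have harg : a * (z + p) + b = a * z + p := by linear_combination hfix
  have hE : (Real.exp (‖p‖ ^ 2 / 2) : ℂ) ≠ 0 := by
    exact_mod_cast Complex.ofReal_ne_zero.mpr (Real.exp_ne_zero _)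
  have hpp : (starRingEnd ℂ) p * p = ((‖p‖ ^ 2 : ℝ) : ℂ) := by
    rw [Complex.conj_mul']
    norm_cast
  have hE2 : ((Real.exp (‖p‖ ^ 2 / 2) : ℂ)) * ((Real.exp (‖p‖ ^ 2 / 2) : ℂ)) =
      Complex.exp ((starRingEnd ℂ) p * p) := by
    rw [← Complex.ofReal_mul, ← Real.exp_add, hpp]
    rw [show ‖p‖ ^ 2 / 2 + ‖p‖ ^ 2 / 2 = ‖p‖ ^ 2 by ring, Complex.ofReal_exp]
  have key : Complex.exp ((starRingEnd ℂ) (-p) * z) *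
      Complex.exp ((starRingEnd ℂ) p * (a * z + p)) =
      Complex.exp ((starRingEnd ℂ) p * (a - 1) * z) *
        Complex.exp ((starRingEnd ℂ) p * p) := by
    rw [← Complex.exp_add, ← Complex.exp_add]
    congr 1
    simp only [map_neg]
    ring
  simp only [wcomp, hφ, hkp, hknp, hq, harg, add_sub_cancel_right]
  set E : ℂ := (Real.exp (‖p‖ ^ 2 / 2) : ℂ) with hEdef
  have expand : Complex.exp ((starRingEnd ℂ) (-p) * z) / E *
      (ψ (z + p) * (Complex.exp ((starRingEnd ℂ) p * (a * z + p)) / E * h (a * z))) =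
      Complex.exp ((starRingEnd ℂ) (-p) * z) * Complex.exp ((starRingEnd ℂ) p * (a * z + p)) *
        (ψ (z + p) * h (a * z)) / (E * E) := by ring
  rw [expand, key, hE2]
  field_simp [Complex.exp_ne_zero]
end

section
/- Let a ∈ ℂ with 0 < |a| < 1, a = |a|e^{iθ} where e^{iθ} is not a root of unity. Then there exist nonnegative integers n₁, n₂, n₃, n₄ such that the points a^{n₁}, a^{n₂}, a^{n₃}, a^{n₄} lie in the open first, second, third, and fourth quadrants of ℂ respectively, and 0 lies in the interior of the convex hull of {a^{n₁}, a^{n₂}, a^{n₃}, a^{n₄}}. -/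
section ZeroMemInteriorAux

open Complex Set

private lemma circle_denseRange_pow' {u : Circle} (h : ∀ n : ℕ, 0 < n → u ^ n ≠ 1) :
    DenseRange (u ^ · : ℕ → Circle) := by
  rw [← denseRange_zpow_iff_pow]
  have hu : Circle.exp (Complex.arg u) = u := Circle.exp_arg u
  set θ : ℝ := Complex.arg u
  set S : AddSubgroup ℝ := AddSubgroup.closure {θ, 2 * Real.pi} with hS
  rcases S.dense_or_cyclic with hd | ⟨c, hc⟩
  · have himg : Circle.exp '' (S : Set ℝ) ⊆ Set.range (u ^ · : ℤ → Circle) := by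
      rintro _ ⟨x, hx, rfl⟩
      induction hx using AddSubgroup.closure_induction with
      | mem y hy =>
        rcases hy with hy | hy
        · exact ⟨1, by simp [hy, hu]⟩
        · rw [Set.mem_singleton_iff] at hy
          exact ⟨0, by simp [hy]⟩
      | zero => exact ⟨0, by simp [Circle.exp_zero]⟩
      | add x y hx hy ihx ihy =>
        obtain ⟨m, hm⟩ := ihx; obtain ⟨k, hk⟩ := ihy
        exact ⟨m + k, by simp [Circle.exp_add, zpow_add, hm, hk]⟩
      | neg x hx ihx =>
        obtain ⟨m, hm⟩ := ihx
        exact ⟨-m, by simp [← hm]⟩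
    have hsurj : DenseRange Circle.exp := by
      intro z
      exact subset_closure ⟨Complex.arg z, Circle.exp_arg z⟩
    have : Dense (Circle.exp '' (S : Set ℝ)) := hsurj.dense_image Circle.exp.continuous hd
    intro z
    exact closure_mono himg (this z)
  · exfalso
    have hθS : θ ∈ S := AddSubgroup.subset_closure (by simp)
    have h2S : (2 * Real.pi) ∈ S := AddSubgroup.subset_closure (by simp)
    rw [hc] at hθS h2S
    obtain ⟨m, hm⟩ := AddSubgroup.mem_closure_singleton.mp hθS
    obtain ⟨k, hk⟩ := AddSubgroup.mem_closure_singleton.mp h2S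
    have hk0 : k ≠ 0 := by
      rintro rfl
      simp at hk
    have hzpow : u ^ k = 1 := by
      have hcoe : ((u ^ k : Circle) : ℂ) = Complex.exp ((k * θ) * Complex.I) := by
        rw [Circle.coe_zpow, ← hu, Circle.coe_exp]
        rw [← Complex.exp_int_mul]
        ring_nf
      have hkθ : (k : ℝ) * θ = m * (2 * Real.pi) := by
        rw [← hm, ← hk, zsmul_eq_mul, zsmul_eq_mul]
        ring
      have : ((u ^ k : Circle) : ℂ) = 1 := by
        rw [hcoe,
          show ((k : ℂ) * (θ : ℂ) * Complex.I) = (((k : ℝ) * θ : ℝ) : ℂ) * Complex.I by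
            push_cast; ring,
          hkθ,
          show ((((m : ℝ) * (2 * Real.pi) : ℝ)) : ℂ) * Complex.I
              = (m : ℂ) * (2 * (Real.pi : ℂ) * Complex.I) by push_cast; ring]
        exact Complex.exp_int_mul_two_pi_mul_I m
      exact Circle.coe_eq_one.mp this
    have hnat : u ^ (k.natAbs : ℤ) = 1 := by
      rcases le_or_gt 0 k with hpos | hneg
      · rwa [Int.natAbs_of_nonneg hpos]
      · rw [Int.ofNat_natAbs_of_nonpos hneg.le, zpow_neg, hzpow, inv_one]
    have : u ^ k.natAbs = 1 := by
      rw [← zpow_natCast]; exact hnat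
    exact h k.natAbs (Int.natAbs_pos.mpr hk0) this

private lemma seg_cross_im' {x y : ℂ} (hx : 0 < x.im) (hy : y.im < 0) :
    ∃ a b : ℝ, 0 < a ∧ 0 < b ∧ a + b = 1 ∧ (a • x + b • y).im = 0 ∧
      (a • x + b • y).re = a * x.re + b * y.re := by
  have hd : 0 < x.im - y.im := by linarith
  refine ⟨-y.im / (x.im - y.im), x.im / (x.im - y.im), div_pos (by linarith) hd,
    div_pos hx hd, ?_, ?_, ?_⟩
  · field_simp
    ring
  · simp only [Complex.add_im, Complex.smul_im, smul_eq_mul]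
    field_simp
    ring
  · simp only [Complex.add_re, Complex.smul_re, smul_eq_mul]


private lemma seg_cross_re' {x y : ℂ} (hx : 0 < x.re) (hy : y.re < 0) :
    ∃ a b : ℝ, 0 < a ∧ 0 < b ∧ a + b = 1 ∧ (a • x + b • y).re = 0 ∧
      (a • x + b • y).im = a * x.im + b * y.im := by
  have hd : 0 < x.re - y.re := by linarith
  refine ⟨-y.re / (x.re - y.re), x.re / (x.re - y.re), div_pos (by linarith) hd,
    div_pos hx hd, ?_, ?_, ?_⟩
  · field_simp
    ring
  · simp only [Complex.add_re, Complex.smul_re, smul_eq_mul]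
    field_simp
    ring
  · simp only [Complex.add_im, Complex.smul_im, smul_eq_mul]


private lemma quad_hull' {z₁ z₂ z₃ z₄ : ℂ}
    (h1 : 0 < z₁.re ∧ 0 < z₁.im) (h2 : z₂.re < 0 ∧ 0 < z₂.im)
    (h3 : z₃.re < 0 ∧ z₃.im < 0) (h4 : 0 < z₄.re ∧ z₄.im < 0) :
    (0 : ℂ) ∈ interior (convexHull ℝ {z₁, z₂, z₃, z₄}) := by
  set K : Set ℂ := convexHull ℝ {z₁, z₂, z₃, z₄} with hKdef
  have hK : Convex ℝ K := convex_convexHull ℝ _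
  have hz₁ : z₁ ∈ K := subset_convexHull ℝ _ (by simp)
  have hz₂ : z₂ ∈ K := subset_convexHull ℝ _ (by simp)
  have hz₃ : z₃ ∈ K := subset_convexHull ℝ _ (by simp)
  have hz₄ : z₄ ∈ K := subset_convexHull ℝ _ (by simp)
  -- point on the positive real axis
  obtain ⟨a₁, b₁, ha₁, hb₁, hab₁, him₁, hre₁⟩ := seg_cross_im' h1.2 h4.2
  set r : ℝ := a₁ * z₁.re + b₁ * z₄.re with hrdef
  have hr : 0 < r := by have := h1.1; have := h4.1; positivity
  have hrK : ((r : ℝ) : ℂ) ∈ K := by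
    have hm := hK hz₁ hz₄ ha₁.le hb₁.le hab₁
    have : a₁ • z₁ + b₁ • z₄ = ((r : ℝ) : ℂ) := by
      apply Complex.ext
      · rw [hre₁]; simp
      · rw [him₁]; simp
    rwa [this] at hm
  -- point on the negative real axis
  obtain ⟨a₂, b₂, ha₂, hb₂, hab₂, him₂, hre₂⟩ := seg_cross_im' h2.2 h3.2
  set t : ℝ := a₂ * z₂.re + b₂ * z₃.re with htdef
  have ht : t < 0 := by
    have h2r := h2.1; have h3r := h3.1; nlinarith
  have htK : ((t : ℝ) : ℂ) ∈ K := by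
    have hm := hK hz₂ hz₃ ha₂.le hb₂.le hab₂
    have : a₂ • z₂ + b₂ • z₃ = ((t : ℝ) : ℂ) := by
      apply Complex.ext
      · rw [hre₂]; simp
      · rw [him₂]; simp
    rwa [this] at hm
  -- point on the positive imaginary axis
  obtain ⟨a₃, b₃, ha₃, hb₃, hab₃, hre₃, him₃⟩ := seg_cross_re' h1.1 h2.1
  set s : ℝ := a₃ * z₁.im + b₃ * z₂.im with hsdef
  have hs : 0 < s := by have := h1.2; have := h2.2; positivity
  have hsK : ((s : ℝ) : ℂ) * Complex.I ∈ K := by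
    have hm := hK hz₁ hz₂ ha₃.le hb₃.le hab₃
    have : a₃ • z₁ + b₃ • z₂ = ((s : ℝ) : ℂ) * Complex.I := by
      apply Complex.ext
      · rw [hre₃]; simp
      · rw [him₃]; simp
    rwa [this] at hm
  -- point on the negative imaginary axis
  obtain ⟨a₄, b₄, ha₄, hb₄, hab₄, hre₄, him₄⟩ := seg_cross_re' h4.1 h3.1
  set w : ℝ := a₄ * z₄.im + b₄ * z₃.im with hwdef
  have hw : w < 0 := by
    have h4i := h4.2; have h3i := h3.2; nlinarith
  have hwK : ((w : ℝ) : ℂ) * Complex.I ∈ K := by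
    have hm := hK hz₄ hz₃ ha₄.le hb₄.le hab₄
    have : a₄ • z₄ + b₄ • z₃ = ((w : ℝ) : ℂ) * Complex.I := by
      apply Complex.ext
      · rw [hre₄]; simp
      · rw [him₄]; simp
    rwa [this] at hm
  -- zero is in K
  have h0K : (0 : ℂ) ∈ K := by
    have hd : 0 < r - t := by linarith
    have hm := hK hrK htK (a := -t / (r - t)) (b := r / (r - t))
      (div_pos (by linarith) hd).le (div_pos hr hd).le (by field_simp; ring)
    have : (-t / (r - t)) • ((r : ℝ) : ℂ) + (r / (r - t)) • ((t : ℝ) : ℂ) = (0 : ℂ) := by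
      apply Complex.ext
      · simp only [Complex.add_re, Complex.smul_re, Complex.ofReal_re, smul_eq_mul,
          Complex.zero_re]
        field_simp
        ring
      · simp only [Complex.add_im, Complex.smul_im, Complex.ofReal_im, smul_eq_mul,
          Complex.zero_im, mul_zero, add_zero]
    rwa [this] at hm
  -- the ball of radius ε is contained in K
  set m : ℝ := min (min r (-t)) (min s (-w)) with hmdef
  have hm0 : 0 < m := by
    simp only [hmdef, lt_min_iff]
    exact ⟨⟨hr, by linarith⟩, ⟨hs, by linarith⟩⟩
  set ε : ℝ := m / 4 with hεdef
  have hε : 0 < ε := by positivity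
  rw [mem_interior]
  refine ⟨Metric.ball 0 ε, ?_, Metric.isOpen_ball, Metric.mem_ball_self hε⟩
  intro v hv
  rw [Metric.mem_ball, dist_zero_right] at hv
  have hvre : |v.re| ≤ ‖v‖ := Complex.abs_re_le_norm v
  have hvim : |v.im| ≤ ‖v‖ := Complex.abs_im_le_norm v
  set α : ℝ := max v.re 0 / r with hα
  set β : ℝ := max v.im 0 / s with hβ
  set γ : ℝ := max (-v.re) 0 / (-t) with hγ
  set δ : ℝ := max (-v.im) 0 / (-w) with hδ
  have hα0 : 0 ≤ α := div_nonneg (le_max_right _ _) hr.le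
  have hβ0 : 0 ≤ β := div_nonneg (le_max_right _ _) hs.le
  have hγ0 : 0 ≤ γ := div_nonneg (le_max_right _ _) (by linarith)
  have hδ0 : 0 ≤ δ := div_nonneg (le_max_right _ _) (by linarith)
  have hmr : m ≤ r := (min_le_left _ _).trans (min_le_left _ _)
  have hmt : m ≤ -t := (min_le_left _ _).trans (min_le_right _ _)
  have hms : m ≤ s := (min_le_right _ _).trans (min_le_left _ _)
  have hmw : m ≤ -w := (min_le_right _ _).trans (min_le_right _ _)
  have key : ∀ u c : ℝ, |u| ≤ ‖v‖ → m ≤ c → 0 < c → max u 0 / c ≤ 1 / 4 := by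
    intro u c hu hc hc0
    rw [div_le_div_iff₀ hc0 (by norm_num)]
    have h1 : max u 0 ≤ |u| := max_le (le_abs_self u) (abs_nonneg u)
    have : max u 0 ≤ ε := le_trans h1 (le_trans hu hv.le)
    calc max u 0 * 4 ≤ ε * 4 := by linarith
      _ = m := by rw [hεdef]; ring
      _ ≤ c := hc
      _ = 1 * c := (one_mul c).symm
  have hα4 : α ≤ 1 / 4 := key _ _ hvre hmr hr
  have hβ4 : β ≤ 1 / 4 := key _ _ hvim hms hs
  have hγ4 : γ ≤ 1 / 4 := key _ _ (by rwa [abs_neg]) hmt (by linarith)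
  have hδ4 : δ ≤ 1 / 4 := key _ _ (by rwa [abs_neg]) hmw (by linarith)
  set lam : ℝ := 1 - (α + β + γ + δ) with hlam
  have hlam0 : 0 ≤ lam := by simp only [hlam]; linarith
  -- v as a convex combination
  have hsum : lam • (0 : ℂ) + α • ((r : ℝ) : ℂ) + β • (((s : ℝ) : ℂ) * Complex.I)
      + γ • ((t : ℝ) : ℂ) + δ • (((w : ℝ) : ℂ) * Complex.I) = v := by
    have hre : α * r + γ * t = v.re := by
      have h1 : α * r = max v.re 0 := div_mul_cancel₀ _ hr.ne'
      have h2 : γ * t = -(max (-v.re) 0) := by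
        rw [hγ, div_mul_eq_mul_div, div_eq_iff (show (-t : ℝ) ≠ 0 by linarith)]
        ring
      rw [h1, h2, ← sub_eq_add_neg]
      exact max_zero_sub_max_neg_zero_eq_self v.re
    have him : β * s + δ * w = v.im := by
      have h1 : β * s = max v.im 0 := div_mul_cancel₀ _ hs.ne'
      have h2 : δ * w = -(max (-v.im) 0) := by
        rw [hδ, div_mul_eq_mul_div, div_eq_iff (show (-w : ℝ) ≠ 0 by linarith)]
        ring
      rw [h1, h2, ← sub_eq_add_neg]
      exact max_zero_sub_max_neg_zero_eq_self v.im
    apply Complex.ext <;>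
      simp [Complex.smul_re, Complex.smul_im, Complex.mul_re, Complex.mul_im] <;>
      linarith
  have hmem := hK.sum_mem (t := (Finset.univ : Finset (Fin 5)))
    (w := ![lam, α, β, γ, δ])
    (z := ![0, ((r : ℝ) : ℂ), ((s : ℝ) : ℂ) * Complex.I, ((t : ℝ) : ℂ),
      ((w : ℝ) : ℂ) * Complex.I])
    (by
      intro i _
      fin_cases i <;> simp [hlam0, hα0, hβ0, hγ0, hδ0])
    (by
      rw [Fin.sum_univ_five]
      simp [hlam]
      ring)
    (by
      intro i _
      fin_cases i <;> simp [h0K, hrK, hsK, htK, hwK])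
  rw [Fin.sum_univ_five] at hmem
  simp only [Matrix.cons_val_zero, Matrix.cons_val_one, Matrix.head_cons, Matrix.cons_val_two,
    Matrix.tail_cons, Matrix.cons_val_three, Matrix.cons_val_four] at hmem
  rwa [hsum] at hmem

private lemma circle_coe_exp_re' (t : ℝ) : ((Circle.exp t : Circle) : ℂ).re = Real.cos t := by
  rw [Circle.coe_exp, Complex.exp_ofReal_mul_I_re]

private lemma circle_coe_exp_im' (t : ℝ) : ((Circle.exp t : Circle) : ℂ).im = Real.sin t := by
  rw [Circle.coe_exp, Complex.exp_ofReal_mul_I_im]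

private lemma exists_pow_mem' {u : Circle} (hd : DenseRange (u ^ · : ℕ → Circle))
    {s : Set ℂ} (hs : IsOpen s) (x : Circle) (hx : (x : ℂ) ∈ s) :
    ∃ n : ℕ, ((u ^ n : Circle) : ℂ) ∈ s := by
  obtain ⟨n, hn⟩ := hd.exists_mem_open (hs.preimage continuous_subtype_val)
    ⟨x, Set.mem_preimage.mpr hx⟩
  exact ⟨n, hn⟩

end ZeroMemInteriorAux

/-- If `0 < |a| < 1` and `a/|a| = e^{iθ}` is not a root of unity, then there are powers
of `a` in each of the four open quadrants, and `0` lies in the interior of their convex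
hull. -/
theorem zero_mem_interior_convexHull_powers
    (a : ℂ) (ha0 : 0 < ‖a‖) (ha1 : ‖a‖ < 1)
    (hroot : ∀ n : ℕ, 0 < n → (a / (‖a‖ : ℂ)) ^ n ≠ 1) :
    ∃ n₁ n₂ n₃ n₄ : ℕ,
      (0 < (a ^ n₁).re ∧ 0 < (a ^ n₁).im) ∧
      ((a ^ n₂).re < 0 ∧ 0 < (a ^ n₂).im) ∧
      ((a ^ n₃).re < 0 ∧ (a ^ n₃).im < 0) ∧
      (0 < (a ^ n₄).re ∧ (a ^ n₄).im < 0) ∧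
      (0 : ℂ) ∈ interior (convexHull ℝ {a ^ n₁, a ^ n₂, a ^ n₃, a ^ n₄}) := by
  have pi_pos := Real.pi_pos
  have hna : (‖a‖ : ℂ) ≠ 0 := by
    exact_mod_cast Complex.ofReal_ne_zero.mpr ha0.ne'
  set u : ℂ := a / (‖a‖ : ℂ) with hu
  have hu_norm : u ∈ Metric.sphere (0 : ℂ) 1 := by
    rw [mem_sphere_zero_iff_norm, hu, norm_div, Complex.norm_real, Real.norm_of_nonneg ha0.le,
      div_self ha0.ne']
  set U : Circle := ⟨u, hu_norm⟩ with hU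
  have hUcoe : (U : ℂ) = u := rfl
  have hUpow : ∀ n : ℕ, ((U ^ n : Circle) : ℂ) = u ^ n := by
    intro n
    rw [Circle.coe_pow]
  have hUroot : ∀ n : ℕ, 0 < n → U ^ n ≠ 1 := by
    intro n hn hpow
    refine hroot n hn ?_
    have := congrArg (fun z : Circle => (z : ℂ)) hpow
    simpa [hUpow n] using this
  have hd : DenseRange (U ^ · : ℕ → Circle) := circle_denseRange_pow' hUroot
  -- the four open quadrants of ℂ
  have hQ1 : IsOpen {z : ℂ | 0 < z.re ∧ 0 < z.im} :=
    (isOpen_lt continuous_const Complex.continuous_re).inter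
      (isOpen_lt continuous_const Complex.continuous_im)
  have hQ2 : IsOpen {z : ℂ | z.re < 0 ∧ 0 < z.im} :=
    (isOpen_lt Complex.continuous_re continuous_const).inter
      (isOpen_lt continuous_const Complex.continuous_im)
  have hQ3 : IsOpen {z : ℂ | z.re < 0 ∧ z.im < 0} :=
    (isOpen_lt Complex.continuous_re continuous_const).inter
      (isOpen_lt Complex.continuous_im continuous_const)
  have hQ4 : IsOpen {z : ℂ | 0 < z.re ∧ z.im < 0} :=
    (isOpen_lt continuous_const Complex.continuous_re).inter
      (isOpen_lt Complex.continuous_im continuous_const)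
  -- powers of U in each quadrant
  obtain ⟨n₁, hn₁⟩ := exists_pow_mem' hd hQ1 (Circle.exp (Real.pi / 4))
    ⟨by rw [circle_coe_exp_re']
        exact Real.cos_pos_of_mem_Ioo ⟨by linarith, by linarith⟩,
     by rw [circle_coe_exp_im']
        exact Real.sin_pos_of_pos_of_lt_pi (by linarith) (by linarith)⟩
  obtain ⟨n₂, hn₂⟩ := exists_pow_mem' hd hQ2 (Circle.exp (3 * Real.pi / 4))
    ⟨by rw [circle_coe_exp_re']
        exact Real.cos_neg_of_pi_div_two_lt_of_lt (by linarith) (by linarith),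
     by rw [circle_coe_exp_im']
        exact Real.sin_pos_of_pos_of_lt_pi (by linarith) (by linarith)⟩
  obtain ⟨n₃, hn₃⟩ := exists_pow_mem' hd hQ3 (Circle.exp (-(3 * Real.pi / 4)))
    ⟨by rw [circle_coe_exp_re', Real.cos_neg]
        exact Real.cos_neg_of_pi_div_two_lt_of_lt (by linarith) (by linarith),
     by rw [circle_coe_exp_im', Real.sin_neg, neg_neg_iff_pos]
        exact Real.sin_pos_of_pos_of_lt_pi (by linarith) (by linarith)⟩
  obtain ⟨n₄, hn₄⟩ := exists_pow_mem' hd hQ4 (Circle.exp (-(Real.pi / 4)))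
    ⟨by rw [circle_coe_exp_re', Real.cos_neg]
        exact Real.cos_pos_of_mem_Ioo ⟨by linarith, by linarith⟩,
     by rw [circle_coe_exp_im', Real.sin_neg, neg_neg_iff_pos]
        exact Real.sin_pos_of_pos_of_lt_pi (by linarith) (by linarith)⟩
  rw [hUpow] at hn₁ hn₂ hn₃ hn₄
  -- transfer signs from u ^ n to a ^ n
  have ha_eq : a = (‖a‖ : ℂ) * u := by
    rw [hu, mul_div_cancel₀ a hna]
  have hpow_re : ∀ n : ℕ, (a ^ n).re = ‖a‖ ^ n * (u ^ n).re := by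
    intro n
    conv_lhs => rw [ha_eq]
    rw [mul_pow, ← Complex.ofReal_pow, Complex.re_ofReal_mul]
  have hpow_im : ∀ n : ℕ, (a ^ n).im = ‖a‖ ^ n * (u ^ n).im := by
    intro n
    conv_lhs => rw [ha_eq]
    rw [mul_pow, ← Complex.ofReal_pow, Complex.im_ofReal_mul]
  have hpos : ∀ n : ℕ, (0 : ℝ) < ‖a‖ ^ n := fun n => pow_pos ha0 n
  have H1 : 0 < (a ^ n₁).re ∧ 0 < (a ^ n₁).im :=
    ⟨by rw [hpow_re]; exact mul_pos (hpos n₁) hn₁.1,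
     by rw [hpow_im]; exact mul_pos (hpos n₁) hn₁.2⟩
  have H2 : (a ^ n₂).re < 0 ∧ 0 < (a ^ n₂).im :=
    ⟨by rw [hpow_re]; exact mul_neg_of_pos_of_neg (hpos n₂) hn₂.1,
     by rw [hpow_im]; exact mul_pos (hpos n₂) hn₂.2⟩
  have H3 : (a ^ n₃).re < 0 ∧ (a ^ n₃).im < 0 :=
    ⟨by rw [hpow_re]; exact mul_neg_of_pos_of_neg (hpos n₃) hn₃.1,
     by rw [hpow_im]; exact mul_neg_of_pos_of_neg (hpos n₃) hn₃.2⟩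
  have H4 : 0 < (a ^ n₄).re ∧ (a ^ n₄).im < 0 :=
    ⟨by rw [hpow_re]; exact mul_pos (hpos n₄) hn₄.1,
     by rw [hpow_im]; exact mul_neg_of_pos_of_neg (hpos n₄) hn₄.2⟩
  exact ⟨n₁, n₂, n₃, n₄, H1, H2, H3, H4, quad_hull' H1 H2 H3 H4⟩
end

section
/- Let a ∈ ℂ with 0 < |a| < 1 and suppose a/|a| is a primitive n-th root of unity with n > 2. Then 0 lies in the interior of the convex hull of {1, a, a², ..., a^{n-1}}. -/
open Finset

/-- If `0 < |a| < 1` and `a/|a|` is a primitive `n`-th root of unity with `n > 2`, then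
`0` lies in the interior of the convex hull of `{1, a, a², …, a^{n-1}}`. -/
theorem zero_mem_interior_convexHull_primitive
    (a : ℂ) (ha0 : 0 < ‖a‖) (ha1 : ‖a‖ < 1) (n : ℕ) (hn : 2 < n)
    (hprim : (a / (‖a‖ : ℂ)) ^ n = 1)
    (hmin : ∀ k : ℕ, 0 < k → k < n → (a / (‖a‖ : ℂ)) ^ k ≠ 1) :
    (0 : ℂ) ∈ interior (convexHull ℝ ((fun k : ℕ => a ^ k) '' {k | k < n})) := by
  set r : ℝ := ‖a‖ with hr
  set ζ : ℂ := a / (r : ℂ) with hζdef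
  set S : Set ℂ := (fun k : ℕ => a ^ k) '' {k | k < n} with hS
  have hrne : (r : ℂ) ≠ 0 := by
    exact_mod_cast (ne_of_gt (show (0:ℝ) < r from ha0))
  have hζ1 : ζ ≠ 1 := by
    have := hmin 1 one_pos (by omega)
    simpa using this
  have hζ2 : ζ ^ 2 ≠ 1 := hmin 2 two_pos hn
  have hnormζ : ‖ζ‖ = 1 := by
    rw [hζdef, norm_div, Complex.norm_real, Real.norm_eq_abs, abs_of_nonneg ha0.le]
    exact div_self ha0.ne'
  -- sum of the roots of unity is zero
  have hsum : ∑ k ∈ range n, ζ ^ k = 0 := by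
    rw [geom_sum_eq hζ1, hprim]
    simp
  -- each power of a scaled appropriately gives ζ^k
  have hpow : ∀ k : ℕ, ((r ^ k)⁻¹ : ℝ) • a ^ k = ζ ^ k := by
    intro k
    rw [Complex.real_smul, hζdef, div_pow]
    push_cast
    field_simp
  have hmem : ∀ k ∈ range n, a ^ k ∈ S := by
    intro k hk
    exact ⟨k, by simpa using hk, rfl⟩
  -- normalized weights
  set Wsum : ℝ := ∑ k ∈ range n, (r ^ k)⁻¹ with hWsum
  have hWsum0 : 0 < Wsum := by
    apply Finset.sum_pos
    · intro k _; positivity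
    · exact nonempty_range_iff.mpr (by omega)
  set W : ℕ → ℝ := fun k => (r ^ k)⁻¹ / Wsum with hW
  have hW0 : ∀ k, 0 < W k := by intro k; apply div_pos (by positivity) hWsum0
  have hW1 : ∑ k ∈ range n, W k = 1 := by
    simp only [hW]
    rw [← Finset.sum_div, ← hWsum, div_self hWsum0.ne']
  have hWz : ∑ k ∈ range n, W k • a ^ k = 0 := by
    have : ∀ k ∈ range n, W k • a ^ k = Wsum⁻¹ • (ζ ^ k) := by
      intro k _
      have h1 : W k • a ^ k = (Wsum⁻¹ * (r ^ k)⁻¹) • a ^ k := by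
        simp only [hW]; rw [div_eq_inv_mul]
      rw [h1, mul_smul, hpow k]
    rw [Finset.sum_congr rfl this, ← Finset.smul_sum, hsum, smul_zero]
  -- 0 is in the convex hull
  have h0mem : (0 : ℂ) ∈ convexHull ℝ S := by
    have h := (range n).centerMass_mem_convexHull (w := W)
      (z := fun k => a ^ k) (fun k _ => (hW0 k).le) (by rw [hW1]; norm_num) hmem
    rwa [Finset.centerMass_eq_of_sum_1 _ _ hW1, hWz] at h
  -- a is not real
  have him : a.im ≠ 0 := by
    intro h
    have hζim : ζ.im = 0 := by
      rw [hζdef, Complex.div_im, h]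
      simp
    have hre2 : ζ.re ^ 2 = 1 := by
      have h1 : Complex.normSq ζ = 1 := by
        rw [← Complex.sq_norm, hnormζ]; norm_num
      rw [Complex.normSq_apply, hζim] at h1
      nlinarith
    have : (ζ.re - 1) * (ζ.re + 1) = 0 := by nlinarith
    rcases mul_eq_zero.mp this with h' | h'
    · exact hζ1 (Complex.ext (by rw [Complex.one_re]; linarith) (by rw [Complex.one_im]; exact hζim))
    · have : ζ = -1 := Complex.ext (by simp only [Complex.neg_re, Complex.one_re]; linarith)
        (by simp only [Complex.neg_im, Complex.one_im, neg_zero]; exact hζim)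
      exact hζ2 (by rw [this]; ring)
  -- affine span is everything
  have haff : affineSpan ℝ S = ⊤ := by
    refine top_unique ?_
    rw [SetLike.le_def]
    intro z _
    have h1M : (1 : ℂ) ∈ affineSpan ℝ S :=
      subset_affineSpan ℝ S ⟨0, by simp; omega, pow_zero a⟩
    have haM : a ∈ affineSpan ℝ S :=
      subset_affineSpan ℝ S ⟨1, by simp; omega, pow_one a⟩
    have h0M : (0 : ℂ) ∈ affineSpan ℝ S := convexHull_subset_affineSpan S h0mem
    set y : ℝ := z.im / a.im with hy
    set x : ℝ := z.re - y * a.re with hx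
    have hm1 : y • (a -ᵥ (0:ℂ)) +ᵥ (0:ℂ) ∈ affineSpan ℝ S :=
      AffineSubspace.smul_vsub_vadd_mem _ y haM h0M h0M
    have hm2 : x • ((1:ℂ) -ᵥ (0:ℂ)) +ᵥ (y • (a -ᵥ (0:ℂ)) +ᵥ (0:ℂ)) ∈ affineSpan ℝ S :=
      AffineSubspace.smul_vsub_vadd_mem _ x h1M h0M hm1
    have hz : z = x • ((1:ℂ) -ᵥ (0:ℂ)) +ᵥ (y • (a -ᵥ (0:ℂ)) +ᵥ (0:ℂ)) := by
      simp only [vsub_eq_sub, vadd_eq_add, sub_zero, add_zero]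
      apply Complex.ext <;>
        simp [Complex.real_smul, hx, hy] <;> field_simp
    rw [hz]; exact hm2
  -- interior is nonempty
  obtain ⟨u, hu⟩ : (interior (convexHull ℝ S)).Nonempty :=
    interior_convexHull_nonempty_iff_affineSpan_eq_top.mpr haff
  -- representation of u as convex combination over range n
  have hinj : ∀ j ∈ range n, ∀ k ∈ range n, a ^ j = a ^ k → j = k := by
    intro j _ k _ h
    have hnorm : r ^ j = r ^ k := by
      have := congrArg norm h
      simpa [norm_pow] using this
    exact (pow_right_strictAnti₀ ha0 ha1).injective hnorm
  have hST : S = ↑((range n).image fun k => a ^ k) := by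
    rw [hS, Finset.coe_image, Finset.coe_range]
    rfl
  have hu' : u ∈ convexHull ℝ S := interior_subset hu
  rw [hST, Finset.convexHull_eq] at hu'
  obtain ⟨c, hc0, hc1, hcc⟩ := hu'
  set c' : ℕ → ℝ := fun k => c (a ^ k) with hc'
  have hc0' : ∀ k ∈ range n, 0 ≤ c' k := fun k hk =>
    hc0 _ (Finset.mem_image_of_mem _ hk)
  have hc1' : ∑ k ∈ range n, c' k = 1 := by
    rw [← Finset.sum_image hinj]; exact hc1
  have hcsum1 : ∑ y ∈ (range n).image (fun k => a ^ k), c y = 1 := hc1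
  have hcc' : ∑ k ∈ range n, c' k • a ^ k = u := by
    rw [← hcc, Finset.centerMass_eq_of_sum_1 _ _ hcsum1, Finset.sum_image hinj]
    rfl
  have hck1 : ∀ k ∈ range n, c' k ≤ 1 := by
    intro k hk
    calc c' k ≤ ∑ j ∈ range n, c' j := Finset.single_le_sum hc0' hk
    _ = 1 := hc1'
  -- choose δ
  have hne : (range n).Nonempty := nonempty_range_iff.mpr (by omega)
  set m : ℝ := (range n).inf' hne W with hm
  have hm0 : 0 < m := by
    rw [hm, Finset.lt_inf'_iff]
    intro k _; exact hW0 k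
  set δ : ℝ := min m (1/2) with hδ
  have hδ0 : 0 < δ := lt_min hm0 (by norm_num)
  have hδhalf : δ ≤ 1/2 := min_le_right _ _
  have hδ1 : δ < 1 := by linarith
  have hδW : ∀ k ∈ range n, δ ≤ W k := fun k hk =>
    le_trans (min_le_left _ _) (Finset.inf'_le _ hk)
  -- the perturbed point v
  set μ : ℕ → ℝ := fun k => W k - δ * c' k with hμ
  have hμ0 : ∀ k ∈ range n, 0 ≤ μ k := by
    intro k hk
    have h1 : δ * c' k ≤ δ * 1 := mul_le_mul_of_nonneg_left (hck1 k hk) hδ0.le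
    have := hδW k hk
    simp only [hμ]; linarith
  have hμsum : ∑ k ∈ range n, μ k = 1 - δ := by
    simp only [hμ]
    rw [Finset.sum_sub_distrib, hW1, ← Finset.mul_sum, hc1']
    ring
  set v : ℂ := ((1 - δ)⁻¹ * (-δ)) • u with hv
  have hμz : ∑ k ∈ range n, μ k • a ^ k = (-δ) • u := by
    simp only [hμ, sub_smul, mul_smul]
    rw [Finset.sum_sub_distrib, hWz, ← Finset.smul_sum, hcc']
    simp
  have hvmem : v ∈ convexHull ℝ S := by
    have h := (range n).centerMass_mem_convexHull (w := μ)
      (z := fun k => a ^ k) hμ0 (by rw [hμsum]; linarith) hmem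
    rw [Finset.centerMass, hμsum, hμz, smul_smul] at h
    exact h
  -- conclude
  have hfin := (convex_convexHull ℝ S).combo_interior_self_mem_interior hu hvmem
    hδ0 (by linarith : (0:ℝ) ≤ 1 - δ) (by ring)
  have : δ • u + (1 - δ) • v = 0 := by
    rw [hv, smul_smul, ← add_smul]
    have h1 : (1 - δ) ≠ 0 := by linarith
    have : δ + (1 - δ) * ((1 - δ)⁻¹ * (-δ)) = 0 := by field_simp; ring
    rw [this, zero_smul]
  rwa [this] at hfin
end

section
/- Let a ∈ ℂ with |a| = 1. The point spectrum of C_{az} on F² is exactly {a^m : m ≥ 0}, with eigenfunctions z^m. -/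
open MeasureTheory Complex

lemma gauss_integrable_pow (m : ℕ) :
    Integrable (fun z : ℂ => (‖z‖ ^ m) ^ 2 * (Real.exp (-(‖z‖ ^ 2)) / Real.pi)) volume := by
  have h1 : Integrable (fun v : ℂ => Complex.exp (-(1/2 : ℂ) * ‖v‖ ^ 2)) volume := by
    simpa using GaussianFourier.integrable_cexp_neg_mul_sq_norm_add (V := ℂ) (b := (1/2 : ℂ)) (by norm_num) 0 0
  have h2 : Integrable (fun v : ℂ => Real.exp (-(1/2 : ℝ) * ‖v‖ ^ 2)) volume := by
    have := h1.norm
    simpa [Complex.norm_exp, ← Complex.ofReal_pow, Complex.ofReal_re] using this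
  have C := (2 : ℝ) ^ m * m.factorial / Real.pi
  refine (h2.const_mul ((2 : ℝ) ^ m * m.factorial / Real.pi)).mono' ?_ ?_
  · exact (Continuous.mul (by continuity) (by continuity)).aestronglyMeasurable
  · filter_upwards with z
    have hpi := Real.pi_pos
    set t := ‖z‖ ^ 2 with ht
    have ht0 : 0 ≤ t := by positivity
    have key : (t/2) ^ m / m.factorial ≤ Real.exp (t/2) :=
      Real.pow_div_factorial_le_exp (t/2) (by positivity) m
    have hfac : (0:ℝ) < m.factorial := by positivity
    have htm : t ^ m ≤ 2 ^ m * m.factorial * Real.exp (t/2) := by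
      have : (t/2)^m = t^m / 2^m := div_pow t 2 m
      rw [this] at key
      have h2m : (0:ℝ) < 2^m := by positivity
      calc t ^ m = (t^m / 2^m / m.factorial) * (2^m * m.factorial) := by
            field_simp
        _ ≤ Real.exp (t/2) * (2^m * m.factorial) := by
            apply mul_le_mul_of_nonneg_right key (by positivity)
        _ = 2 ^ m * m.factorial * Real.exp (t/2) := by ring
    have hnorm : (‖z‖ ^ m) ^ 2 = t ^ m := by
      rw [ht, ← pow_mul, ← pow_mul, mul_comm]
    have hee : Real.exp (t/2) * Real.exp (-t) = Real.exp (-(1/2:ℝ) * t) := by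
      rw [← Real.exp_add]; ring_nf
    rw [Real.norm_eq_abs, _root_.abs_of_nonneg (by positivity), hnorm]
    calc t ^ m * (Real.exp (-t) / Real.pi)
        ≤ (2 ^ m * m.factorial * Real.exp (t/2)) * (Real.exp (-t) / Real.pi) := by
          apply mul_le_mul_of_nonneg_right htm (by positivity)
      _ = 2 ^ m * m.factorial / Real.pi * Real.exp (-(1/2:ℝ) * t) := by
          rw [← hee]; ring

theorem eig_subset_aux
    (a : ℂ) (ha : ‖a‖ = 1) :
    ({lam | ∃ f, Differentiable ℂ f ∧ f ≠ 0 ∧ (∀ z, f (a*z) = lam * f z)} : Set ℂ) ⊆ {lam | ∃ m : ℕ, lam = a ^ m} := by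
  rintro lam ⟨f, hent, hf0, hfz⟩
  by_contra hcon
  simp only [Set.mem_setOf_eq, not_exists] at hcon
  have hder : ∀ n, iteratedDeriv n f 0 = 0 := by
    intro n
    by_contra hn
    refine hcon n ?_
    have hfeq : (fun z => f (a * z)) = fun z => lam * f z := funext hfz
    have h1 : iteratedDeriv n (fun z => f (a * z)) 0 = a ^ n * iteratedDeriv n f 0 := by
      rw [iteratedDeriv_comp_const_mul hent.contDiff a]; simp
    have h2 : iteratedDeriv n (fun z => lam * f z) 0 = lam * iteratedDeriv n f 0 := by
      rw [← iteratedDerivWithin_univ, ← iteratedDerivWithin_univ]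
      exact iteratedDerivWithin_const_mul (Set.mem_univ (0:ℂ)) uniqueDiffOn_univ lam
        hent.contDiff.contDiffAt.contDiffWithinAt
    rw [hfeq, h2] at h1
    replace h1 := mul_eq_mul_right_iff.mp h1
    rcases h1 with h | h
    · exact h
    · exact absurd h hn
  apply hf0
  funext z
  rw [← Complex.taylorSeries_eq_of_entire' 0 z hent]
  simp [hder]


/-- For `|a| = 1`, the point spectrum of `C_{az}` on `F²` is exactly `{a^m : m ≥ 0}`,
with eigenfunctions `z^m`. -/
theorem pointSpectrum_Caz_unimodular
    (a : ℂ) (ha : ‖a‖ = 1) :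
    pointSpectrum (fun _ => 1) (fun z => a * z) = {lam | ∃ m : ℕ, lam = a ^ m} ∧
    (∀ m : ℕ, wcomp (fun _ => 1) (fun z => a * z) (fun z => z ^ m) =
      fun z => a ^ m * z ^ m) := by
  have key : ∀ m : ℕ, wcomp (fun _ => 1) (fun z => a * z) (fun z => z ^ m) =
      fun z => a ^ m * z ^ m := by
    intro m; funext z; simp [wcomp, mul_pow]
  refine ⟨?_, key⟩
  apply Set.Subset.antisymm
  · rintro lam ⟨f, ⟨hent, -⟩, hf0, heq⟩
    refine eig_subset_aux a ha ⟨f, hent, hf0, fun z => ?_⟩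
    have := congrFun heq z
    simpa [wcomp] using this
  · rintro lam ⟨m, rfl⟩
    refine ⟨fun z => z ^ m, ⟨differentiable_id.pow m, ?_⟩, ?_, key m⟩
    · rw [gaussMeasure, integrable_withDensity_iff]
      · have := gauss_integrable_pow m
        apply this.congr
        filter_upwards with z
        rw [ENNReal.toReal_ofReal (by positivity)]
        simp [norm_pow]
      · exact ((by continuity : Continuous fun z : ℂ => Real.exp (-(‖z‖^2))/Real.pi).measurable).ennreal_ofReal
      · filter_upwards with z using ENNReal.ofReal_lt_top
    · intro h
      have := congrFun h 1
      simp at this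
end

section
/- Let T be a bounded operator on a Hilbert space with ‖T‖ ≤ 1. If λ ∈ W(T) with |λ| = 1, then λ is an eigenvalue of T. -/
open scoped InnerProductSpace

/-- If `T` is a contraction on a Hilbert space and `λ ∈ W(T)` has `|λ| = 1`, then `λ`
is an eigenvalue of `T`. -/
theorem unimodular_numRange_mem_eigenvalue
    {H : Type*} [NormedAddCommGroup H] [InnerProductSpace ℂ H] [CompleteSpace H]
    (T : H →L[ℂ] H) (hT : ‖T‖ ≤ 1) (lam : ℂ)
    (hlam : lam ∈ {w : ℂ | ∃ f : H, ‖f‖ = 1 ∧ w = ⟪f, T f⟫_ℂ})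
    (hmod : ‖lam‖ = 1) :
    ∃ f : H, f ≠ 0 ∧ T f = lam • f := by
  obtain ⟨f, hf, hl⟩ := hlam
  have hf0 : f ≠ 0 := by intro h; simp [h] at hf
  refine ⟨f, hf0, ?_⟩
  have hTf : ‖T f‖ ≤ 1 := by
    calc ‖T f‖ ≤ ‖T‖ * ‖f‖ := T.le_opNorm f
    _ ≤ 1 := by rw [hf]; simpa using hT
  have hinner : ⟪T f, lam • f⟫_ℂ = lam * (starRingEnd ℂ) lam := by
    rw [inner_smul_right]
    rw [← inner_conj_symm, ← hl]
  have hre : Complex.re ⟪T f, lam • f⟫_ℂ = 1 := by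
    have habs : ‖lam‖ = 1 := hmod
    rw [hinner, Complex.mul_conj]
    norm_cast
    simp [Complex.normSq_eq_norm_sq, habs]
  have key : ‖T f - lam • f‖ ^ 2 ≤ 0 := by
    rw [@norm_sub_sq ℂ]
    have h1 : ‖T f‖ ^ 2 ≤ 1 := by nlinarith [norm_nonneg (T f)]
    have h2 : ‖lam • f‖ ^ 2 = 1 := by
      rw [norm_smul, hmod, hf]; norm_num
    rw [h2]
    simp only [RCLike.re_to_complex]
    rw [hre]
    linarith
  have hz : T f - lam • f = 0 := by
    have := sq_nonneg ‖T f - lam • f‖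
    have hn : ‖T f - lam • f‖ ^ 2 = 0 := le_antisymm key this
    have : ‖T f - lam • f‖ = 0 := by nlinarith [norm_nonneg (T f - lam • f)]
    exact norm_eq_zero.mp this
  exact sub_eq_zero.mp hz
end

section
/- Let b ∈ ℂ, b ≠ 0, φ(z) = z + b, and ψ(z) = ψ(0)K_{-b}(z) with ψ(0) ≠ 0, so that C_{ψ,φ} is a bounded (scalar multiple of a unitary) operator on F². Then the point spectrum of C_{K_{-b}/‖K_{-b}‖, z+b} is empty. -/
open MeasureTheory Complex

section Aux

open Set

/-- An entire function vanishing a.e. on a ball is identically zero. -/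
lemma entire_zero_of_ae_zero_ball {f : ℂ → ℂ} (hf : Differentiable ℂ f) {R : ℝ} (hR : 0 < R)
    (h : ∀ᵐ z : ℂ ∂(volume.restrict (Metric.ball 0 R)), f z = 0) : f = 0 := by
  set Z : Set ℂ := {z | z ∈ Metric.ball (0:ℂ) R ∧ f z = 0} with hZdef
  have hnull : volume {z : ℂ | z ∈ Metric.ball (0:ℂ) R ∧ f z ≠ 0} = 0 := by
    have := (ae_restrict_iff' (measurableSet_ball)).1 h
    rw [ae_iff] at this
    convert this using 2
    ext z
    simp only [mem_setOf_eq, Classical.not_imp]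
  have hZinf : Z.Infinite := by
    by_contra hfin
    rw [Set.not_infinite] at hfin
    have h1 : volume Z = 0 := hfin.measure_zero _
    have hsub : Metric.ball (0:ℂ) R ⊆ Z ∪ {z | z ∈ Metric.ball (0:ℂ) R ∧ f z ≠ 0} := by
      intro z hz
      by_cases hfz : f z = 0
      · exact Or.inl ⟨hz, hfz⟩
      · exact Or.inr ⟨hz, hfz⟩
    have : volume (Metric.ball (0:ℂ) R) ≤ volume Z + volume {z | z ∈ Metric.ball (0:ℂ) R ∧ f z ≠ 0} :=
      (measure_mono hsub).trans (measure_union_le _ _)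
    rw [h1, hnull, add_zero] at this
    exact (Metric.measure_ball_pos (μ := volume) 0 hR).not_ge this
  obtain ⟨x, -, hx⟩ := hZinf.exists_accPt_of_subset_isCompact (isCompact_closedBall (0:ℂ) R)
    (fun z hz => Metric.ball_subset_closedBall hz.1)
  have hfreq : ∃ᶠ z in nhdsWithin x {x}ᶜ, f z = 0 := by
    rw [frequently_nhdsWithin_iff]
    have := accPt_iff_frequently.1 hx
    exact this.mono (fun z hz => ⟨hz.2.2, hz.1⟩)
  have han : AnalyticOnNhd ℂ f Set.univ := analyticOnNhd_univ_iff_differentiable.mpr hf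
  have := han.eqOn_zero_of_preconnected_of_frequently_eq_zero isPreconnected_univ
    (Set.mem_univ x) hfreq
  funext z
  exact this (Set.mem_univ z)

lemma ball_add_image (v : ℂ) (R : ℝ) :
    (fun z => z + v) '' Metric.ball 0 R = Metric.ball v R := by
  ext u
  simp only [Set.mem_image, Metric.mem_ball]
  constructor
  · rintro ⟨z, hz, rfl⟩
    rw [dist_zero_right] at hz
    rwa [dist_eq_norm, add_sub_cancel_right]
  · intro hu
    exact ⟨u - v, by rwa [dist_zero_right, ← dist_eq_norm], by ring⟩

lemma ae_zero_on_ball_of_step (H : ℂ → ENNReal) (hH : Measurable H)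
    (hL : ∫⁻ z, H z < ⊤) (c : ℂ) (hc : c ≠ 0) (s : ENNReal) (hs : 1 ≤ s)
    (hstep : ∀ z, H (z + c) = s * H z) :
    ∀ᵐ z ∂(volume.restrict (Metric.ball (0:ℂ) (‖c‖ / 2))), H z = 0 := by
  set R : ℝ := ‖c‖ / 2 with hRdef
  have hRpos : 0 < R := by
    have := norm_pos_iff.mpr hc
    rw [hRdef]; linarith
  set I₀ : ENNReal := ∫⁻ z in Metric.ball (0:ℂ) R, H z with hI₀
  have hiter : ∀ n : ℕ, ∀ z, H (z + (n : ℂ) * c) = s ^ n * H z := by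
    intro n
    induction n with
    | zero => intro z; simp
    | succ n ih =>
      intro z
      have harg : z + ((n + 1 : ℕ) : ℂ) * c = (z + c) + (n : ℂ) * c := by push_cast; ring
      rw [harg, ih (z + c), hstep z, pow_succ]
      ring
  have hInt : ∀ n : ℕ, ∫⁻ z in Metric.ball ((n : ℂ) * c) R, H z = s ^ n * I₀ := by
    intro n
    have mp := measurePreserving_add_right (volume : Measure ℂ) ((n : ℂ) * c)
    have emb : MeasurableEmbedding (fun z : ℂ => z + (n : ℂ) * c) :=
      (Homeomorph.addRight ((n : ℂ) * c)).measurableEmbedding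
    have h1 := mp.setLIntegral_comp_emb emb H (Metric.ball 0 R)
    rw [ball_add_image] at h1
    rw [← h1]
    rw [← lintegral_const_mul _ hH]
    exact lintegral_congr fun z => hiter n z
  have hdisj : ∀ m n : ℕ, m ≠ n →
      Disjoint (Metric.ball ((m : ℂ) * c) R) (Metric.ball ((n : ℂ) * c) R) := by
    intro m n hmn
    apply Metric.ball_disjoint_ball
    have h1 : dist ((m : ℂ) * c) ((n : ℂ) * c) = ‖(m : ℂ) - (n : ℂ)‖ * ‖c‖ := by
      rw [dist_eq_norm, ← sub_mul, norm_mul]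
    have h2 : (1 : ℝ) ≤ ‖(m : ℂ) - (n : ℂ)‖ := by
      have heq : (m : ℂ) - (n : ℂ) = (((m : ℤ) - (n : ℤ) : ℤ) : ℂ) := by push_cast; ring
      rw [heq]
      have hne : ((m : ℤ) - (n : ℤ)) ≠ 0 := sub_ne_zero.mpr (by exact_mod_cast hmn)
      calc (1 : ℝ) ≤ |(((m : ℤ) - (n : ℤ) : ℤ) : ℝ)| := by
            exact_mod_cast Int.one_le_abs hne
        _ = ‖(((m : ℤ) - (n : ℤ) : ℤ) : ℂ)‖ := by
            rw [← Complex.ofReal_intCast, Complex.norm_real, Real.norm_eq_abs]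
    have hcpos : (0 : ℝ) < ‖c‖ := norm_pos_iff.mpr hc
    rw [h1, hRdef]
    nlinarith
  have hsum : ∀ N : ℕ, (N : ENNReal) * I₀ ≤ ∫⁻ z, H z := by
    intro N
    have hd : Set.PairwiseDisjoint (↑(Finset.range N))
        (fun n : ℕ => Metric.ball ((n : ℂ) * c) R) := by
      intro m _ n _ hmn
      exact hdisj m n hmn
    have h1 := lintegral_biUnion_finset (μ := (volume : Measure ℂ)) hd
      (fun n _ => Metric.isOpen_ball.measurableSet) H
    calc (N : ENNReal) * I₀
        = ∑ n ∈ Finset.range N, (1 : ENNReal) * I₀ := by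
          rw [Finset.sum_const, Finset.card_range]; simp [mul_comm]
      _ ≤ ∑ n ∈ Finset.range N, s ^ n * I₀ := by
          apply Finset.sum_le_sum
          intro n _
          exact mul_le_mul_left (one_le_pow_of_one_le' hs n) I₀
      _ = ∑ n ∈ Finset.range N, ∫⁻ z in Metric.ball ((n : ℂ) * c) R, H z := by
          exact Finset.sum_congr rfl fun n _ => (hInt n).symm
      _ = ∫⁻ z in ⋃ n ∈ Finset.range N, Metric.ball ((n : ℂ) * c) R, H z := h1.symm
      _ ≤ ∫⁻ z, H z := setLIntegral_le_lintegral _ _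
  have hI0 : I₀ = 0 := by
    by_contra h0
    have hIle : I₀ ≤ ∫⁻ z, H z := setLIntegral_le_lintegral _ _
    have hIlt : I₀ < ⊤ := lt_of_le_of_lt hIle hL
    obtain ⟨N, hN⟩ := ENNReal.exists_nat_gt (ENNReal.div_lt_top hL.ne h0).ne
    have : (∫⁻ z, H z) < (N : ENNReal) * I₀ :=
      (ENNReal.div_lt_iff (Or.inl h0) (Or.inl hIlt.ne)).1 hN
    exact absurd (hsum N) (not_le.mpr this)
  rw [hI₀] at hI0
  exact (ae_restrict_iff' Metric.isOpen_ball.measurableSet).2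
    ((setLIntegral_eq_zero_iff Metric.isOpen_ball.measurableSet hH).1 hI0)

lemma fock_step (b lam : ℂ) (f : ℂ → ℂ)
    (heq : ∀ z, (Complex.exp (-(starRingEnd ℂ) b * z) / (Real.exp (‖b‖ ^ 2 / 2) : ℂ)) * f (z + b)
      = lam * f z) (z : ℂ) :
    ‖f (z + b)‖ ^ 2 * Real.exp (-‖z + b‖ ^ 2)
      = ‖lam‖ ^ 2 * (‖f z‖ ^ 2 * Real.exp (-‖z‖ ^ 2)) := by
  have h1 := congrArg (fun u : ℂ => ‖u‖) (heq z)
  simp only [norm_mul, norm_div, Complex.norm_exp] at h1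
  rw [Complex.norm_real, Real.norm_eq_abs, abs_of_pos (Real.exp_pos _)] at h1
  set x : ℝ := ((starRingEnd ℂ) b * z).re with hx
  have hre : (-(starRingEnd ℂ) b * z).re = -x := by simp [hx]
  rw [hre, Real.exp_neg] at h1
  have hA : ‖f (z + b)‖
      = ‖lam‖ * ‖f z‖ * (Real.exp (‖b‖ ^ 2 / 2) * Real.exp x) := by
    field_simp at h1
    rw [h1]; ring
  have hnormsq : ‖z + b‖ ^ 2 = ‖z‖ ^ 2 + ‖b‖ ^ 2 + 2 * x := by
    rw [Complex.sq_norm, Complex.sq_norm, Complex.sq_norm, Complex.normSq_add]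
    rw [hx]
    ring_nf
  have key : Real.exp (‖b‖ ^ 2 / 2) * Real.exp (‖b‖ ^ 2 / 2)
      * (Real.exp x * Real.exp x)
      * Real.exp (-‖z + b‖ ^ 2) = Real.exp (-‖z‖ ^ 2) := by
    simp only [← Real.exp_add]
    rw [Real.exp_eq_exp]
    rw [hnormsq]; ring
  rw [hA]
  calc (‖lam‖ * ‖f z‖
        * (Real.exp (‖b‖ ^ 2 / 2) * Real.exp x)) ^ 2 * Real.exp (-‖z + b‖ ^ 2)
      = (‖lam‖ * ‖f z‖) ^ 2
        * (Real.exp (‖b‖ ^ 2 / 2) * Real.exp (‖b‖ ^ 2 / 2)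
          * (Real.exp x * Real.exp x) * Real.exp (-‖z + b‖ ^ 2)) := by ring
    _ = ‖lam‖ ^ 2 * (‖f z‖ ^ 2 * Real.exp (-‖z‖ ^ 2)) := by
        rw [key]; ring

end Aux

/-- For `b ≠ 0`, the unitary weighted composition operator `C_{K_{-b}/‖K_{-b}‖, z+b}`
on `F²` has empty point spectrum. -/
theorem pointSpectrum_translation_empty
    (b : ℂ) (hb : b ≠ 0)
    (ψ0 : ℂ) (hψ0 : ψ0 ≠ 0)
    (w : ℂ → ℂ)
    (hw : w = fun z => Complex.exp (-(starRingEnd ℂ) b * z) / (Real.exp (‖b‖ ^ 2 / 2) : ℂ)) :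
    pointSpectrum w (fun z => z + b) = ∅ := by
  subst hw
  ext lam
  simp only [Set.mem_empty_iff_false, iff_false]
  rintro ⟨f, ⟨hfd, hfi⟩, hfne, hfe⟩
  have heq : ∀ z, (Complex.exp (-(starRingEnd ℂ) b * z) / (Real.exp (‖b‖ ^ 2 / 2) : ℂ)) * f (z + b)
      = lam * f z := by
    intro z
    have := congrFun hfe z
    simpa [wcomp] using this
  -- lam ≠ 0
  have hlam : lam ≠ 0 := by
    rintro rfl
    apply hfne
    funext u
    have h := heq (u - b)
    rw [zero_mul] at h
    have hwne : Complex.exp (-(starRingEnd ℂ) b * (u - b)) / (Real.exp (‖b‖ ^ 2 / 2) : ℂ) ≠ 0 :=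
      div_ne_zero (Complex.exp_ne_zero _) (by exact_mod_cast Real.exp_ne_zero _)
    have h2 : f (u - b + b) = 0 := (mul_eq_zero.mp h).resolve_left hwne
    rw [sub_add_cancel] at h2
    simpa using h2
  set r : ℝ := ‖lam‖ ^ 2 with hrdef
  have hr : 0 < r := by
    rw [hrdef]
    have := norm_pos_iff.mpr hlam; positivity
  set H : ℂ → ENNReal := fun z => ENNReal.ofReal (‖f z‖ ^ 2 * Real.exp (-‖z‖ ^ 2)) with hHdef
  have hHstep : ∀ z, H (z + b) = ENNReal.ofReal r * H z := by
    intro z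
    rw [hHdef]
    simp only []
    rw [fock_step b lam f heq z, ← hrdef, ENNReal.ofReal_mul hr.le]
  have hHmeas : Measurable H := by
    apply Measurable.ennreal_ofReal
    exact ((hfd.continuous.norm.pow 2).mul
      (Real.continuous_exp.comp (continuous_norm.pow 2).neg)).measurable
  have hLfin : ∫⁻ z, H z < ⊤ := by
    have hg : Measurable fun z : ℂ => ENNReal.ofReal (‖f z‖ ^ 2) :=
      ((hfd.continuous.norm.pow 2)).measurable.ennreal_ofReal
    have hdm : Measurable fun z : ℂ => ENNReal.ofReal (Real.exp (-(‖z‖ ^ 2)) / Real.pi) :=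
      (((Real.continuous_exp.comp (continuous_norm.pow 2).neg)).div_const _).measurable.ennreal_ofReal
    have h1 : ∫⁻ z, ENNReal.ofReal (‖f z‖ ^ 2) ∂gaussMeasure < ⊤ := hfi.lintegral_lt_top
    have h2 : ∫⁻ z, ENNReal.ofReal (‖f z‖ ^ 2) ∂gaussMeasure
        = ∫⁻ z, (fun z : ℂ => ENNReal.ofReal (Real.exp (-(‖z‖ ^ 2)) / Real.pi)) z
          * ENNReal.ofReal (‖f z‖ ^ 2) ∂volume := by
      rw [gaussMeasure]
      exact lintegral_withDensity_eq_lintegral_mul volume hdm hg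
    have hpoint : ∀ z, H z = ENNReal.ofReal Real.pi
        * (ENNReal.ofReal (Real.exp (-(‖z‖ ^ 2)) / Real.pi) * ENNReal.ofReal (‖f z‖ ^ 2)) := by
      intro z
      rw [hHdef]
      simp only []
      rw [← ENNReal.ofReal_mul (by positivity), ← ENNReal.ofReal_mul Real.pi_pos.le]
      congr 1
      field_simp
    calc ∫⁻ z, H z
        = ∫⁻ z, ENNReal.ofReal Real.pi
          * ((fun z : ℂ => ENNReal.ofReal (Real.exp (-(‖z‖ ^ 2)) / Real.pi)) z
            * ENNReal.ofReal (‖f z‖ ^ 2)) := lintegral_congr hpoint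
      _ = ENNReal.ofReal Real.pi
          * ∫⁻ z, (fun z : ℂ => ENNReal.ofReal (Real.exp (-(‖z‖ ^ 2)) / Real.pi)) z
            * ENNReal.ofReal (‖f z‖ ^ 2) := lintegral_const_mul _ (hdm.mul hg)
      _ < ⊤ := ENNReal.mul_lt_top ENNReal.ofReal_lt_top (h2 ▸ h1)
  obtain ⟨c, hc, s, hs1, hcs⟩ : ∃ c : ℂ, c ≠ 0 ∧ ∃ s : ENNReal, 1 ≤ s ∧
      ∀ z, H (z + c) = s * H z := by
    rcases le_or_gt 1 r with h | h
    · exact ⟨b, hb, ENNReal.ofReal r, ENNReal.one_le_ofReal.2 h, hHstep⟩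
    · refine ⟨-b, neg_ne_zero.2 hb, ENNReal.ofReal r⁻¹,
        ENNReal.one_le_ofReal.2 (one_le_inv_iff₀.2 ⟨hr, h.le⟩), ?_⟩
      intro z
      have h0 := hHstep (z - b)
      rw [sub_add_cancel] at h0
      have hz : z + -b = z - b := by ring
      rw [hz, ENNReal.ofReal_inv_of_pos hr, h0, ← mul_assoc,
        ENNReal.inv_mul_cancel (ENNReal.ofReal_pos.2 hr).ne' ENNReal.ofReal_ne_top, one_mul]
  have hae := ae_zero_on_ball_of_step H hHmeas hLfin c hc s hs1 hcs
  have hae' : ∀ᵐ z ∂(volume.restrict (Metric.ball (0:ℂ) (‖c‖ / 2))), f z = 0 := by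
    filter_upwards [hae] with z hz
    rw [hHdef] at hz
    simp only [] at hz
    rw [ENNReal.ofReal_eq_zero] at hz
    have hexp := Real.exp_pos (-‖z‖ ^ 2)
    have hsq : ‖f z‖ ^ 2 = 0 := by nlinarith [sq_nonneg ‖f z‖]
    have : ‖f z‖ = 0 := by
      have := sq_eq_zero_iff.mp hsq
      exact this
    exact norm_eq_zero.mp this
  exact hfne (entire_zero_of_ae_zero_ball hfd (half_pos (norm_pos_iff.2 hc)) hae')
end

section
/- Let a ∈ ℂ with |a| = 1, a ≠ 1, b ∈ ℂ, φ(z) = az + b, and ψ(z) = ψ(0)e^{-a·conj(b)·z} with ψ(0) ≠ 0. Set u = -conj(a)b/(conj(a)-1). Then C_{k_u, z-u} C_{ψ,φ} C_{k_{-u}, z+u} = ψ(0) e^{a|b|²/(a-1)} C_{az}; in particular C_{ψ,φ} is unitarily equivalent to ψ(0)e^{a|b|²/(a-1)} C_{az}. -/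
open MeasureTheory Complex

/-- For `|a| = 1`, `a ≠ 1`, `φ(z) = az + b`, `ψ(z) = ψ(0)e^{-a b̄ z}` with `ψ(0) ≠ 0`,
and `u = -ā b/(ā - 1)`, conjugating `C_{ψ,φ}` by the unitary `C_{k_u, z-u}` gives the
scalar multiple `ψ(0)e^{a|b|²/(a-1)} C_{az}`; in particular `C_{ψ,φ}` is unitarily
equivalent to `ψ(0)e^{a|b|²/(a-1)} C_{az}`. -/
theorem unitary_equivalence_rotation
    (a b ψ0 : ℂ) (ha : ‖a‖ = 1) (ha1 : a ≠ 1) (hψ0 : ψ0 ≠ 0)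
    (ψ : ℂ → ℂ) (hψ : ψ = fun z => ψ0 * Complex.exp (-a * (starRingEnd ℂ) b * z))
    (φ : ℂ → ℂ) (hφ : φ = fun z => a * z + b)
    (u : ℂ) (hu : u = -(starRingEnd ℂ) a * b / ((starRingEnd ℂ) a - 1))
    (ku : ℂ → ℂ) (hku : ku = fun z => Complex.exp ((starRingEnd ℂ) u * z) / (Real.exp (‖u‖ ^ 2 / 2) : ℂ))
    (knu : ℂ → ℂ) (hknu : knu = fun z => Complex.exp ((starRingEnd ℂ) (-u) * z) / (Real.exp (‖u‖ ^ 2 / 2) : ℂ)) :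
    ∀ h : ℂ → ℂ,
      wcomp ku (fun z => z - u) (wcomp ψ φ (wcomp knu (fun z => z + u) h)) =
        fun z => ψ0 * Complex.exp (a * (‖b‖ ^ 2 : ℝ) / (a - 1)) * h (a * z) := by
  have ha1' : a - 1 ≠ 0 := sub_ne_zero.mpr ha1
  have haa : (starRingEnd ℂ) a * a = 1 := by
    have := Complex.mul_conj a
    rw [Complex.normSq_eq_norm_sq, ha] at this
    rw [mul_comm, this]; norm_num
  have hca : (starRingEnd ℂ) a - 1 ≠ 0 := by
    intro hc
    apply ha1
    have h1 : (starRingEnd ℂ) a = 1 := by linear_combination hc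
    calc a = (starRingEnd ℂ) ((starRingEnd ℂ) a) := by rw [Complex.conj_conj]
    _ = 1 := by rw [h1]; simp
  have hub : u = b / (a - 1) := by
    rw [hu]; field_simp; linear_combination (-b) * haa
  have hcu : (starRingEnd ℂ) u = -a * (starRingEnd ℂ) b / (a - 1) := by
    rw [hu]; simp [map_div₀]
  intro h
  funext z
  simp only [wcomp, hψ, hφ, hku, hknu]
  have harg : a * (z - u) + b + u = a * z := by rw [hub]; field_simp; ring
  rw [harg]
  have hnu : ((‖u‖ ^ 2 : ℝ) : ℂ) = u * (starRingEnd ℂ) u := by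
    rw [Complex.mul_conj]; norm_cast
    rw [Complex.normSq_eq_norm_sq]
  have hnb : ((‖b‖ ^ 2 : ℝ) : ℂ) = b * (starRingEnd ℂ) b := by
    rw [Complex.mul_conj]; norm_cast
    rw [Complex.normSq_eq_norm_sq]
  have hE : ((Real.exp (‖u‖ ^ 2 / 2) : ℝ) : ℂ) = Complex.exp (((‖u‖ ^ 2 / 2 : ℝ)) : ℂ) := by
    rw [Complex.ofReal_exp]
  have key : Complex.exp ((starRingEnd ℂ) u * z) / ((Real.exp (‖u‖ ^ 2 / 2) : ℝ) : ℂ) *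
      (ψ0 * Complex.exp (-a * (starRingEnd ℂ) b * (z - u)) *
        (Complex.exp ((starRingEnd ℂ) (-u) * (a * (z - u) + b)) / ((Real.exp (‖u‖ ^ 2 / 2) : ℝ) : ℂ))) =
      ψ0 * Complex.exp ((starRingEnd ℂ) u * z + (-a * (starRingEnd ℂ) b * (z - u)) +
        (starRingEnd ℂ) (-u) * (a * (z - u) + b) - ((‖u‖ ^ 2 / 2 : ℝ) : ℂ) - ((‖u‖ ^ 2 / 2 : ℝ) : ℂ)) := by
    rw [hE]
    simp only [Complex.exp_sub, Complex.exp_add]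
    ring
  have hexp : (starRingEnd ℂ) u * z + (-a * (starRingEnd ℂ) b * (z - u)) +
      (starRingEnd ℂ) (-u) * (a * (z - u) + b) - ((‖u‖ ^ 2 / 2 : ℝ) : ℂ) - ((‖u‖ ^ 2 / 2 : ℝ) : ℂ) =
      a * ((‖b‖ ^ 2 : ℝ) : ℂ) / (a - 1) := by
    push_cast
    have hn2u : ((‖u‖ : ℝ) : ℂ) ^ 2 = u * (starRingEnd ℂ) u := by push_cast at hnu; exact hnu
    have hn2b : ((‖b‖ : ℝ) : ℂ) ^ 2 = b * (starRingEnd ℂ) b := by push_cast at hnb; exact hnb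
    simp only [map_neg]
    rw [hn2u, hn2b, hcu, hub]
    have hinv : (a - 1) * (a - 1)⁻¹ = 1 := mul_inv_cancel₀ ha1'
    linear_combination (a * (starRingEnd ℂ) b * z - a * b * (starRingEnd ℂ) b * (a - 1)⁻¹) * hinv
  rw [hexp] at key
  linear_combination h (a * z) * key
end
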